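/- Let S(z), |z| = 1, be an r×r matrix-function on 𝕋, positive definite a.e. with entries in L¹(𝕋) and with log det S ∈ L¹(𝕋), and let A(z) = (f_{jk}(z)) be a measurable lower triangular matrix-function with f_{jj}(z) ≥ 0 a.e. such that S(z) = A(z)(A(z))* a.e. Then Σ_{j=1}^{r} log f_{jj}(z) = (1/2) log det S(z) for a.e. z ∈ 𝕋, and log f_{jj} ∈ L¹(𝕋) for every j = 1, 2, …, r. -/

import Mathlib

/-!
Pointwise, `det S = |det A|² = (∏ⱼ f_jj)²`, so positive definiteness forces every `f_jj > 0`
and the identity for the logarithms follows. Each `log f_jj` is bounded above by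
`f_jj² / 2 ≤ S_jj / 2`, which is integrable; since the logarithms sum to the integrable function
`½ log det S`, each of them is also bounded below by an integrable function.
-/

open MeasureTheory Complex Filter Set Metric Matrix
open scoped ComplexOrder

noncomputable section

/-- The point `e^{it}` on the unit circle. -/
def circlePt (t : ℝ) : ℂ := Complex.exp (t * Complex.I)

/-- Normalized parametrization of the unit circle by `t ∈ (0, 2π]`. -/
def circleMeasure : Measure ℝ := volume.restrict (Set.Ioc 0 (2 * Real.pi))

/-- `w` is the radial (nontangential) boundary value of `F` at the boundary point `e^{it}`. -/
def HasBoundaryValueAt (F : ℂ → ℂ) (t : ℝ) (w : ℂ) : Prop :=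
  Tendsto (fun r : ℝ => F ((r : ℂ) * circlePt t)) (nhdsWithin 1 (Set.Iio 1)) (nhds w)

/-- Membership in the Hardy space `H_p` of the unit disk. -/
def MemHardy (p : ℝ) (F : ℂ → ℂ) : Prop :=
  DifferentiableOn ℂ F (Metric.ball (0 : ℂ) 1) ∧
  ∃ C : ℝ, ∀ r ∈ Set.Ico (0 : ℝ) 1,
    (∫ t in (0 : ℝ)..(2 * Real.pi), ‖F ((r : ℂ) * circlePt t)‖ ^ p) ≤ C

/-- `H_∞`: bounded analytic functions on the unit disk. -/
def MemHinfty (F : ℂ → ℂ) : Prop :=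
  DifferentiableOn ℂ F (Metric.ball (0 : ℂ) 1) ∧
  ∃ C : ℝ, ∀ z ∈ Metric.ball (0 : ℂ) 1, ‖F z‖ ≤ C

/-- `F` is an outer function: `F(z) = c · exp((1/2π) ∫ (e^{it}+z)/(e^{it}-z) log|F(e^{it})| dt)`,
where `|F(e^{it})| = m t` is the boundary modulus of `F` and `|c| = 1`. -/
def IsOuter (F : ℂ → ℂ) : Prop :=
  ∃ (c : ℂ) (m : ℝ → ℝ), ‖c‖ = 1 ∧
    (∀ᵐ t ∂circleMeasure,
      Tendsto (fun r : ℝ => ‖F ((r : ℂ) * circlePt t)‖) (nhdsWithin 1 (Set.Iio 1)) (nhds (m t))) ∧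
    (∀ z ∈ Metric.ball (0 : ℂ) 1,
      F z = c * Complex.exp ((2 * Real.pi : ℂ)⁻¹ *
        ∫ t in (0 : ℝ)..(2 * Real.pi), ((circlePt t + z) / (circlePt t - z)) * (Real.log (m t) : ℂ)))

/-- The `n`-th Fourier coefficient of a function on the circle. -/
def fourierCoef (f : ℝ → ℂ) (n : ℤ) : ℂ :=
  (2 * Real.pi)⁻¹ * ∫ t in (0 : ℝ)..(2 * Real.pi), f t * Complex.exp (-(n : ℂ) * t * Complex.I)

/-- `χ` is a spectral factor of the matrix function `S` on the circle: its entries are in `H₂`,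
its determinant is outer, and the boundary values `B` of `χ` satisfy `S = B Bᴴ` a.e. -/
def IsSpectralFactor {r : ℕ} (S : ℝ → Matrix (Fin r) (Fin r) ℂ)
    (χ : ℂ → Matrix (Fin r) (Fin r) ℂ) : Prop :=
  (∀ j k, MemHardy 2 (fun z => χ z j k)) ∧
  IsOuter (fun z => (χ z).det) ∧
  ∃ B : ℝ → Matrix (Fin r) (Fin r) ℂ,
    (∀ j k, ∀ᵐ t ∂circleMeasure, HasBoundaryValueAt (fun z => χ z j k) t (B t j k)) ∧
    (∀ᵐ t ∂circleMeasure, S t = B t * (B t)ᴴ)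

theorem Real.log_le_sq_div_two (x : ℝ) : Real.log x ≤ x ^ 2 / 2 := by
  have h := Real.log_le_self (sq_nonneg x)
  rw [Real.log_pow] at h
  push_cast at h
  linarith

theorem MeasureTheory.integrable_of_le_of_sum_eq {α ι : Type*} [MeasurableSpace α]
    {μ : Measure α} [Fintype ι] [DecidableEq ι] {u g : ι → α → ℝ} {h : α → ℝ}
    (hu : ∀ i, AEStronglyMeasurable (u i) μ) (hg : ∀ i, Integrable (g i) μ)
    (hh : Integrable h μ) (hle : ∀ i, u i ≤ᵐ[μ] g i) (hsum : ∀ᵐ x ∂μ, ∑ i, u i x = h x)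
    (i : ι) : Integrable (u i) μ := by
  refine integrable_of_le_of_le (hu i) (g₁ := fun x => h x - ∑ k ∈ Finset.univ.erase i, g k x)
    ?_ (hle i) (hh.sub (integrable_finsetSum _ fun k _ => hg k)) (hg i)
  filter_upwards [hsum, ae_all_iff.2 hle] with x hx hxle
  have := Finset.sum_le_sum fun k (_ : k ∈ Finset.univ.erase i) => hxle k
  rw [← hx, ← Finset.add_sum_erase _ _ (Finset.mem_univ i)]
  linarith

namespace Matrix

variable {n 𝕜 : Type*} [Fintype n] [RCLike 𝕜] (A : Matrix n n 𝕜)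

theorem norm_det_mul_conjTranspose_self [DecidableEq n] : ‖(A * Aᴴ).det‖ = ‖A.det‖ ^ 2 := by
  rw [det_mul, det_conjTranspose, RCLike.star_def, RCLike.mul_conj, ← RCLike.ofReal_pow,
    RCLike.norm_ofReal, abs_of_nonneg (sq_nonneg _)]

theorem re_mul_conjTranspose_self_apply (i : n) :
    RCLike.re ((A * Aᴴ) i i) = ∑ k, ‖A i k‖ ^ 2 := by
  simp [mul_apply, RCLike.mul_conj]

theorem norm_sq_le_re_mul_conjTranspose_self_apply (i k : n) :
    ‖A i k‖ ^ 2 ≤ RCLike.re ((A * Aᴴ) i i) := by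
  rw [re_mul_conjTranspose_self_apply]
  exact Finset.single_le_sum (f := fun k => ‖A i k‖ ^ 2) (fun _ _ => sq_nonneg _)
    (Finset.mem_univ k)

theorem sum_log_norm_diag_eq_half_log_norm_det [DecidableEq n] [LinearOrder n]
    (hA : A.IsLowerTriangular) (hdet : (A * Aᴴ).det ≠ 0) :
    ∑ i, Real.log ‖A i i‖ = 1 / 2 * Real.log ‖(A * Aᴴ).det‖ := by
  have hdetA : ‖A.det‖ = ∏ i, ‖A i i‖ := by
    rw [det_of_isLowerTriangular A hA, norm_prod]
  have hdiag : ∀ i ∈ Finset.univ, ‖A i i‖ ≠ 0 := by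
    rw [← Finset.prod_ne_zero_iff, ← hdetA, norm_ne_zero_iff]
    rintro h0
    simp [det_mul, h0] at hdet
  rw [norm_det_mul_conjTranspose_self, Real.log_pow, hdetA, Real.log_prod hdiag]
  push_cast
  ring

end Matrix

/-- If `S` is a.e. positive definite with integrable entries and `log det S ∈ L¹(𝕋)`, and
`S = A Aᴴ` a.e. with `A` lower triangular with nonnegative diagonal, then
`∑_j log f_{jj} = (1/2) log det S` a.e. and each `log f_{jj}` is integrable. -/
theorem log_diagonal_integrable (r : ℕ)
    (S : ℝ → Matrix (Fin r) (Fin r) ℂ)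
    (hpos : ∀ᵐ t ∂circleMeasure, (S t).PosDef)
    (hint : ∀ j k, Integrable (fun t => S t j k) circleMeasure)
    (hlog : Integrable (fun t => Real.log (‖(S t).det‖)) circleMeasure)
    (A : ℝ → Matrix (Fin r) (Fin r) ℂ)
    (hAmeas : ∀ j k, Measurable (fun t => A t j k))
    (hAlow : ∀ t, ∀ j k : Fin r, j < k → A t j k = 0)
    (hAdiag : ∀ᵐ t ∂circleMeasure, ∀ j : Fin r, (A t j j).im = 0 ∧ 0 ≤ (A t j j).re)
    (hAfact : ∀ᵐ t ∂circleMeasure, S t = A t * (A t)ᴴ) :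
    (∀ᵐ t ∂circleMeasure,
      ∑ j : Fin r, Real.log ((A t j j).re) = (1 / 2) * Real.log (‖(S t).det‖)) ∧
    (∀ j : Fin r, Integrable (fun t => Real.log ((A t j j).re)) circleMeasure) := by
  have hdiag_norm : ∀ᵐ t ∂circleMeasure, ∀ j, (A t j j).re = ‖A t j j‖ := by
    filter_upwards [hAdiag] with t ht j
    rw [← Complex.abs_re_eq_norm.2 (ht j).1, abs_of_nonneg (ht j).2]
  have hsum : ∀ᵐ t ∂circleMeasure,
      ∑ j : Fin r, Real.log ((A t j j).re) = (1 / 2) * Real.log (‖(S t).det‖) := by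
    filter_upwards [hpos, hAfact, hdiag_norm] with t hp hfac ht
    rw [hfac] at hp ⊢
    simp only [ht]
    exact (A t).sum_log_norm_diag_eq_half_log_norm_det (hAlow t) hp.det_pos.ne'
  refine ⟨hsum, integrable_of_le_of_sum_eq (g := fun j t => (S t j j).re / 2) (fun j => ?_)
    (fun j => (hint j j).re.div_const 2) (hlog.const_mul _) (fun j => ?_) hsum⟩
  · exact (Real.measurable_log.comp (Complex.measurable_re.comp (hAmeas j j))).aestronglyMeasurable
  · filter_upwards [hAfact, hdiag_norm] with t hfac ht
    rw [ht, hfac]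
    grw [Real.log_le_sq_div_two, (A t).norm_sq_le_re_mul_conjTranspose_self_apply j j]
    rfl
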